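/- arXiv:2509.00694 — 2 statements merged into one kernel-verified Lean document; each statement's English description precedes it below -/
import Mathlib

section
/- Under the standing assumptions, ∫_ℝ |ℓ|·‖φ_ℓ‖_{L^∞_y([-1,1])} dℓ ≲ 𝓓₄^{1/2}. (Second estimate of Lemma 3.1.) -/
open MeasureTheory Set Filter Topology
open scoped ENNReal

noncomputable section

/-- `L²` norm over `y ∈ [-1,1]`. -/
def L2y (f : ℝ → ℂ) : ℝ := (∫ y in Set.Icc (-1 : ℝ) 1, ‖f y‖ ^ 2) ^ ((1 : ℝ) / 2)

/-- `L^∞` norm over `y ∈ [-1,1]`. -/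
def Linfy (f : ℝ → ℂ) : ℝ := ⨆ y : Set.Icc (-1 : ℝ) 1, ‖f (y : ℝ)‖

/-- `L²([-1,1])` inner product `⟨f,g⟩ = ∫ conj (f y) * g y dy`. -/
def ipy (f g : ℝ → ℂ) : ℂ :=
  ∫ y in Set.Icc (-1 : ℝ) 1, (starRingEnd ℂ) (f y) * g y

/-- The rate `λ_k`. -/
def lamf (ν k : ℝ) : ℝ :=
  if ν ≤ |k| then ν ^ ((1 : ℝ) / 3) * |k| ^ ((2 : ℝ) / 3) else ν

/-- The weight `α(k)`. -/
def alphf (ν k : ℝ) : ℝ :=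
  if ν ≤ |k| then ν ^ ((2 : ℝ) / 3) * |k| ^ (-((2 : ℝ) / 3)) else 1

/-- The weight `β(k)`. -/
def betaf (ν k : ℝ) : ℝ :=
  if ν ≤ |k| then ν ^ ((1 : ℝ) / 3) * |k| ^ (-((4 : ℝ) / 3)) else 0

/-- The frequency weight `W(k) = e^{2cλ_k t}⟨k⟩^{2m}⟨k⁻¹⟩^{2ε}`. -/
def Wf (ν m ε c t k : ℝ) : ℝ :=
  Real.exp (2 * c * lamf ν k * t) * (1 + k ^ 2) ^ m * (1 + k⁻¹ ^ 2) ^ ε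

/-- `‖∇_k f‖²_{L²} = k²‖f‖²_{L²} + ‖∂_y f‖²_{L²}` (with `df = ∂_y f`). -/
def gradSq (k : ℝ) (f df : ℝ → ℂ) : ℝ :=
  k ^ 2 * (L2y f) ^ 2 + (L2y df) ^ 2

/-- The weighted energy `𝓔`. -/
def EEn (ν m ε c t : ℝ) (ω dω : ℝ → ℝ → ℂ) : ℝ≥0∞ :=
  ∫⁻ k : ℝ, ENNReal.ofReal
    (Wf ν m ε c t k * ((L2y (ω k)) ^ 2 + alphf ν k * (L2y (dω k)) ^ 2))

/-- The dissipation functional `𝓓₁`. -/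
def D1n (ν m ε c t : ℝ) (ω dω : ℝ → ℝ → ℂ) : ℝ≥0∞ :=
  ∫⁻ k : ℝ, ENNReal.ofReal (Wf ν m ε c t k * (ν * gradSq k (ω k) (dω k)))

/-- The dissipation functional `𝓓₂`. -/
def D2n (ν m ε c t : ℝ) (dω d2ω : ℝ → ℝ → ℂ) : ℝ≥0∞ :=
  ∫⁻ k : ℝ, ENNReal.ofReal (Wf ν m ε c t k * (ν * alphf ν k * gradSq k (dω k) (d2ω k)))

/-- The dissipation functional `𝓓₃`. -/
def D3n (ν m ε c t : ℝ) (ω : ℝ → ℝ → ℂ) : ℝ≥0∞ :=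
  ∫⁻ k : ℝ, ENNReal.ofReal (Wf ν m ε c t k * (lamf ν k * (L2y (ω k)) ^ 2))

/-- The dissipation functional `𝓓₄`. -/
def D4n (ν m ε c t : ℝ) (φ dφ : ℝ → ℝ → ℂ) : ℝ≥0∞ :=
  ∫⁻ k : ℝ, ENNReal.ofReal (Wf ν m ε c t k * (k ^ 2 * gradSq k (φ k) (dφ k)))

/-- The dissipation functional `𝓓₅`. -/
def D5n (ν m ε c t : ℝ) (dφ d2φ : ℝ → ℝ → ℂ) : ℝ≥0∞ :=
  ∫⁻ k : ℝ, ENNReal.ofReal (Wf ν m ε c t k * (alphf ν k * k ^ 2 * gradSq k (dφ k) (d2φ k)))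

/-!
For `k ≠ 0`, `φ_k` vanishes at `y = -1`, so `φ_k(y) = ∫_{-1}^y ∂_y φ_k` and Cauchy–Schwarz on
`[-1,1]` gives `‖φ_k‖_{L^∞} ≤ √2 ‖∂_y φ_k‖_{L²}`; hence `|k| ‖φ_k‖_{L^∞}` is at most `√2` times
the square root of the integrand of `𝓓₄` divided by `W(k)`. Cauchy–Schwarz in `k` then bounds the
left-hand side by `√2 (∫ W⁻¹)^{1/2} 𝓓₄^{1/2}`, and `W(k) ≥ 1 + k²` gives `∫ W⁻¹ ≤ π`.

Continuity of `∂_y φ_k`, which puts it in `L²`, comes from `∂_y² φ_k = ω_k + k² φ_k`: if `φ_k` is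
bounded the right-hand side is integrable, and if it is not, `Linfy φ_k` (a real `⨆`) is `0`.
-/

section OnIcc

variable {E : Type*} [NormedAddCommGroup E] {a b : ℝ}

theorem continuousOn_Icc_of_eq_add_primitive [NormedSpace ℝ E] {f g : ℝ → E} (hab : a ≤ b)
    (hg : IntegrableOn g (Icc a b)) (hf : ∀ y ∈ Icc a b, f y = f a + ∫ s in a..y, g s) :
    ContinuousOn f (Icc a b) := by
  rw [← uIcc_of_le hab] at hg ⊢
  exact (continuousOn_const.add (intervalIntegral.continuousOn_primitive_interval hg)).congr
    (by rwa [uIcc_of_le hab])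

theorem ContinuousOn.memLp_restrict_Icc {f : ℝ → E} (hf : ContinuousOn f (Icc a b))
    (p : ℝ≥0∞) : MemLp f p (volume.restrict (Icc a b)) := by
  obtain ⟨C, hC⟩ := isCompact_Icc.exists_bound_of_continuousOn hf
  exact MemLp.of_bound (hf.aestronglyMeasurable measurableSet_Icc) C
    (ae_restrict_of_forall_mem measurableSet_Icc hC)

end OnIcc

theorem lintegral_le_weighted_cauchySchwarz {α : Type*} [MeasurableSpace α] {μ : Measure α}
    {f w : α → ℝ≥0∞} (hf : AEMeasurable f μ) (hw : AEMeasurable w μ) (hw₀ : ∀ x, w x ≠ 0)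
    (hw_top : ∀ x, w x ≠ ⊤) :
    ∫⁻ x, f x ∂μ ≤ (∫⁻ x, (w x)⁻¹ ∂μ) ^ (1 / 2 : ℝ) * (∫⁻ x, w x * f x ^ 2 ∂μ) ^ (1 / 2 : ℝ) := by
  have hsplit : ∀ x, f x = (w x)⁻¹ ^ (1 / 2 : ℝ) * (w x * f x ^ 2) ^ (1 / 2 : ℝ) := fun x => by
    rw [← ENNReal.mul_rpow_of_nonneg _ _ (by norm_num), ← mul_assoc,
      ENNReal.inv_mul_cancel (hw₀ x) (hw_top x), one_mul, ← ENNReal.rpow_natCast,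
      ← ENNReal.rpow_mul]
    norm_num
  calc ∫⁻ x, f x ∂μ
      = ∫⁻ x, ((fun x => (w x)⁻¹ ^ (1 / 2 : ℝ)) * fun x => (w x * f x ^ 2) ^ (1 / 2 : ℝ)) x ∂μ :=
        lintegral_congr fun x => hsplit x
    _ ≤ _ := ENNReal.lintegral_mul_le_Lp_mul_Lq μ Real.HolderConjugate.two_two
        (hw.inv.pow_const _) ((hw.mul (hf.pow_const 2)).pow_const _)
    _ = _ := by simp only [← ENNReal.rpow_mul]; norm_num

theorem L2y_nonneg (f : ℝ → ℂ) : 0 ≤ L2y f :=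
  Real.rpow_nonneg (integral_nonneg fun _ => by positivity) _

theorem norm_primitive_le_sqrt_two_mul_L2y {g : ℝ → ℂ}
    (hg : MemLp g 2 (volume.restrict (Icc (-1 : ℝ) 1))) {y : ℝ} (hy : y ∈ Icc (-1 : ℝ) 1) :
    ‖∫ s in (-1 : ℝ)..y, g s‖ ≤ √2 * L2y g := by
  have hg1 : IntegrableOn g (Icc (-1 : ℝ) 1) := hg.integrable one_le_two
  have hcs := integral_mul_le_Lp_mul_Lq_of_nonneg (μ := volume.restrict (Icc (-1 : ℝ) 1))
    Real.HolderConjugate.two_two (f := fun _ => (1 : ℝ)) (g := fun s => ‖g s‖)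
    (ae_of_all _ fun _ => zero_le_one) (ae_of_all _ fun _ => norm_nonneg _)
    (memLp_const 1) (by simpa using hg.norm)
  calc ‖∫ s in (-1 : ℝ)..y, g s‖ ≤ ∫ s in (-1 : ℝ)..y, ‖g s‖ :=
        intervalIntegral.norm_integral_le_integral_norm hy.1
    _ ≤ ∫ s in (-1 : ℝ)..1, ‖g s‖ :=
        intervalIntegral.integral_mono_interval le_rfl hy.1 hy.2
          (ae_of_all _ fun _ => norm_nonneg _)
          ((intervalIntegrable_iff_integrableOn_Icc_of_le (by norm_num)).2 hg1.norm)
    _ = ∫ s in Icc (-1 : ℝ) 1, 1 * ‖g s‖ := by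
        rw [intervalIntegral.integral_of_le (by norm_num), ← integral_Icc_eq_integral_Ioc]
        simp only [one_mul]
    _ ≤ √2 * L2y g := by
        convert hcs using 2
        · norm_num [Real.sqrt_eq_rpow]
        · simp [L2y]

theorem Linfy_le_sqrt_two_mul_L2y {f g : ℝ → ℂ}
    (hg : MemLp g 2 (volume.restrict (Icc (-1 : ℝ) 1))) (hf₀ : f (-1) = 0)
    (hf : ∀ y ∈ Icc (-1 : ℝ) 1, f y = f (-1) + ∫ s in (-1 : ℝ)..y, g s) :
    Linfy f ≤ √2 * L2y g :=
  Real.iSup_le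
    (fun y => by rw [hf y y.2, hf₀, zero_add]; exact norm_primitive_le_sqrt_two_mul_L2y hg y.2)
    (mul_nonneg (Real.sqrt_nonneg 2) (L2y_nonneg g))

theorem Linfy_le_sqrt_two_mul_L2y_of_helmholtz (k : ℝ) {φ dφ d2φ ω : ℝ → ℂ}
    (hφ : Measurable φ) (hω : IntegrableOn ω (Icc (-1 : ℝ) 1)) (hφ₀ : φ (-1) = 0)
    (hφ' : ∀ y ∈ Icc (-1 : ℝ) 1, φ y = φ (-1) + ∫ s in (-1 : ℝ)..y, dφ s)
    (hdφ' : ∀ y ∈ Icc (-1 : ℝ) 1, dφ y = dφ (-1) + ∫ s in (-1 : ℝ)..y, d2φ s)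
    (heq : ∀ y ∈ Icc (-1 : ℝ) 1, d2φ y - (k : ℂ) ^ 2 * φ y = ω y) :
    Linfy φ ≤ √2 * L2y dφ := by
  by_cases hbdd : BddAbove (range fun y : Icc (-1 : ℝ) 1 => ‖φ y‖)
  · obtain ⟨M, hM⟩ := hbdd
    have hφ_int : IntegrableOn φ (Icc (-1 : ℝ) 1) :=
      Measure.integrableOn_of_bounded (M := M) (by simp [Real.volume_Icc])
        hφ.aestronglyMeasurable
        ((ae_restrict_iff' measurableSet_Icc).2 (ae_of_all _ fun y hy => hM ⟨⟨y, hy⟩, rfl⟩))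
    have hd2φ_int : IntegrableOn d2φ (Icc (-1 : ℝ) 1) :=
      (hω.add (hφ_int.const_mul ((k : ℂ) ^ 2))).congr_fun
        (fun y hy => by simp only [Pi.add_apply, ← heq y hy, sub_add_cancel]) measurableSet_Icc
    exact Linfy_le_sqrt_two_mul_L2y
      ((continuousOn_Icc_of_eq_add_primitive (by norm_num) hd2φ_int hdφ').memLp_restrict_Icc 2)
      hφ₀ hφ'
  · rw [Linfy, Real.iSup_of_not_bddAbove hbdd]
    exact mul_nonneg (Real.sqrt_nonneg 2) (L2y_nonneg dφ)

theorem measurable_L2y {ψ : ℝ → ℝ → ℂ} (hψ : Measurable (Function.uncurry ψ)) :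
    Measurable fun k => L2y (ψ k) :=
  ((hψ.norm.pow_const 2).stronglyMeasurable.integral_prod_right'
    (ν := volume.restrict (Icc (-1 : ℝ) 1))).measurable.pow_const _

theorem abs_mul_L2y_sq_le (k : ℝ) (f df : ℝ → ℂ) :
    (|k| * L2y df) ^ 2 ≤ k ^ 2 * gradSq k f df := by
  rw [mul_pow, sq_abs, gradSq]
  have : 0 ≤ k ^ 2 * (k ^ 2 * L2y f ^ 2) := by positivity
  nlinarith

theorem lamf_nonneg {ν : ℝ} (hν : 0 ≤ ν) (k : ℝ) : 0 ≤ lamf ν k := by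
  unfold lamf; split_ifs <;> positivity

theorem Wf_pos (ν m ε c t k : ℝ) : 0 < Wf ν m ε c t k := by
  unfold Wf; positivity

theorem one_add_sq_le_Wf {ν m ε c t : ℝ} (hν : 0 ≤ ν) (hm : 1 ≤ m) (hε : 0 ≤ ε) (hc : 0 ≤ c)
    (ht : 0 ≤ t) (k : ℝ) : 1 + k ^ 2 ≤ Wf ν m ε c t k := by
  have hk : 1 ≤ 1 + k ^ 2 := le_add_of_nonneg_right (sq_nonneg k)
  have hexp : 1 ≤ Real.exp (2 * c * lamf ν k * t) :=
    Real.one_le_exp (by have := lamf_nonneg hν k; positivity)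
  have hpow : 1 + k ^ 2 ≤ (1 + k ^ 2) ^ m := by
    simpa using Real.rpow_le_rpow_of_exponent_le hk hm
  have hinv : 1 ≤ (1 + k⁻¹ ^ 2) ^ ε :=
    Real.one_le_rpow (le_add_of_nonneg_right (sq_nonneg _)) hε
  calc 1 + k ^ 2 ≤ 1 * (1 + k ^ 2) ^ m * 1 := by rwa [one_mul, mul_one]
    _ ≤ Wf ν m ε c t k := by unfold Wf; gcongr

theorem measurable_Wf (ν m ε c t : ℝ) : Measurable (Wf ν m ε c t) := by
  have hlamf : Measurable (lamf ν) :=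
    Measurable.ite (measurableSet_le measurable_const measurable_abs)
      (measurable_const.mul (measurable_abs.pow_const _)) measurable_const
  unfold Wf
  fun_prop

theorem lintegral_inv_ofReal_Wf_le_pi {ν m ε c t : ℝ} (hν : 0 ≤ ν) (hm : 1 ≤ m) (hε : 0 ≤ ε)
    (hc : 0 ≤ c) (ht : 0 ≤ t) :
    ∫⁻ k, (ENNReal.ofReal (Wf ν m ε c t k))⁻¹ ≤ ENNReal.ofReal Real.pi := calc
  ∫⁻ k, (ENNReal.ofReal (Wf ν m ε c t k))⁻¹ ≤ ∫⁻ k : ℝ, ENNReal.ofReal (1 + k ^ 2)⁻¹ :=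
      lintegral_mono fun k => by
        rw [ENNReal.ofReal_inv_of_pos (by positivity)]
        exact ENNReal.inv_le_inv.2
          (ENNReal.ofReal_le_ofReal (one_add_sq_le_Wf hν hm hε hc ht k))
  _ = ENNReal.ofReal Real.pi := by
      rw [← ofReal_integral_eq_lintegral_ofReal integrable_inv_one_add_sq
        (ae_of_all _ fun _ => by positivity), integral_univ_inv_one_add_sq]

theorem lintegral_ofReal_le_sqrt_pi_mul {ν m ε c t : ℝ} (hν : 0 ≤ ν) (hm : 1 ≤ m) (hε : 0 ≤ ε)
    (hc : 0 ≤ c) (ht : 0 ≤ t) {h : ℝ → ℝ} (hh : Measurable h) :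
    ∫⁻ k, ENNReal.ofReal (h k) ≤ ENNReal.ofReal √Real.pi *
      (∫⁻ k, ENNReal.ofReal (Wf ν m ε c t k) * ENNReal.ofReal (h k) ^ 2) ^ (1 / 2 : ℝ) := by
  refine (lintegral_le_weighted_cauchySchwarz hh.ennreal_ofReal.aemeasurable
    (measurable_Wf ν m ε c t).ennreal_ofReal.aemeasurable
    (fun k => (ENNReal.ofReal_pos.2 (Wf_pos ..)).ne') (fun _ => ENNReal.ofReal_ne_top)).trans ?_
  rw [Real.sqrt_eq_rpow, ← ENNReal.ofReal_rpow_of_nonneg Real.pi_pos.le (by norm_num)]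
  gcongr
  exact lintegral_inv_ofReal_Wf_le_pi hν hm hε hc ht

theorem lintegral_ofReal_Wf_mul_sq_le_D4n (ν m ε c t : ℝ) (φ dφ : ℝ → ℝ → ℂ) :
    ∫⁻ k, ENNReal.ofReal (Wf ν m ε c t k) * ENNReal.ofReal (|k| * L2y (dφ k)) ^ 2
      ≤ D4n ν m ε c t φ dφ := lintegral_mono fun k => by
  rw [← ENNReal.ofReal_pow (mul_nonneg (abs_nonneg k) (L2y_nonneg _)),
    ← ENNReal.ofReal_mul (Wf_pos ..).le]
  exact ENNReal.ofReal_le_ofReal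
    (mul_le_mul_of_nonneg_left (abs_mul_L2y_sq_le k _ _) (Wf_pos ..).le)

theorem lemma31_second (m ε : ℝ) (hm : 1 < m) (hε : ε ∈ Set.Ioo (0 : ℝ) (1 / 12)) :
    ∃ C : ℝ, 0 < C ∧
      ∀ (ν c t : ℝ), ν ∈ Set.Ioo (0 : ℝ) 1 → 0 < c → 0 ≤ t →
      ∀ (ω dω d2ω φ dφ d2φ : ℝ → ℝ → ℂ),
      Measurable (Function.uncurry ω) → Measurable (Function.uncurry dω) →
      Measurable (Function.uncurry d2ω) → Measurable (Function.uncurry φ) →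
      Measurable (Function.uncurry dφ) → Measurable (Function.uncurry d2φ) →
      (∀ k : ℝ, ω k (-1) = 0 ∧ ω k 1 = 0) →
      (∀ k : ℝ, ∀ y ∈ Set.Icc (-1 : ℝ) 1,
        ω k y = ω k (-1) + ∫ s in (-1 : ℝ)..y, dω k s) →
      (∀ k : ℝ, ∀ y ∈ Set.Icc (-1 : ℝ) 1,
        dω k y = dω k (-1) + ∫ s in (-1 : ℝ)..y, d2ω k s) →
      (∀ k : ℝ, MemLp (d2ω k) 2 (volume.restrict (Set.Icc (-1 : ℝ) 1))) →
      (∀ k : ℝ, k ≠ 0 → φ k (-1) = 0 ∧ φ k 1 = 0) →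
      (∀ k : ℝ, k ≠ 0 → ∀ y ∈ Set.Icc (-1 : ℝ) 1,
        φ k y = φ k (-1) + ∫ s in (-1 : ℝ)..y, dφ k s) →
      (∀ k : ℝ, k ≠ 0 → ∀ y ∈ Set.Icc (-1 : ℝ) 1,
        dφ k y = dφ k (-1) + ∫ s in (-1 : ℝ)..y, d2φ k s) →
      (∀ k : ℝ, k ≠ 0 → ∀ y ∈ Set.Icc (-1 : ℝ) 1,
        d2φ k y - (k : ℂ) ^ 2 * φ k y = ω k y) →
      EEn ν m ε c t ω dω ≠ ⊤ → D1n ν m ε c t ω dω ≠ ⊤ → D2n ν m ε c t dω d2ω ≠ ⊤ →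
      D3n ν m ε c t ω ≠ ⊤ → D4n ν m ε c t φ dφ ≠ ⊤ → D5n ν m ε c t dφ d2φ ≠ ⊤ →
      ∫⁻ l : ℝ, ENNReal.ofReal (|l| * Linfy (φ l)) ≤
        ENNReal.ofReal C * (D4n ν m ε c t φ dφ) ^ ((1 : ℝ) / 2) := by
  refine ⟨√(2 * Real.pi), by positivity, ?_⟩
  intro ν c t hν hc ht ω dω d2ω φ dφ d2φ _ _ _ hφ hdφ _ _ hω' hdω' hd2ω hφ₀ hφ' hdφ' hpde
    _ _ _ _ _ _
  have hω_int : ∀ l, IntegrableOn (ω l) (Icc (-1 : ℝ) 1) := fun l =>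
    (continuousOn_Icc_of_eq_add_primitive (by norm_num)
      (continuousOn_Icc_of_eq_add_primitive (by norm_num)
        ((hd2ω l).integrable one_le_two) (hdω' l)).integrableOn_Icc (hω' l)).integrableOn_Icc
  have hpointwise : ∀ᵐ l : ℝ, ENNReal.ofReal (|l| * Linfy (φ l)) ≤
      ENNReal.ofReal √2 * ENNReal.ofReal (|l| * L2y (dφ l)) := by
    filter_upwards [compl_mem_ae_iff.2 (measure_singleton (0 : ℝ))] with l hl
    rw [← ENNReal.ofReal_mul (Real.sqrt_nonneg 2), mul_left_comm]
    exact ENNReal.ofReal_le_ofReal (mul_le_mul_of_nonneg_left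
      (Linfy_le_sqrt_two_mul_L2y_of_helmholtz l (hφ.comp measurable_prodMk_left) (hω_int l)
        (hφ₀ l hl).1 (hφ' l hl) (hdφ' l hl) (hpde l hl)) (abs_nonneg l))
  have hh : Measurable fun l => |l| * L2y (dφ l) := measurable_abs.mul (measurable_L2y hdφ)
  calc ∫⁻ l, ENNReal.ofReal (|l| * Linfy (φ l))
      ≤ ∫⁻ l, ENNReal.ofReal √2 * ENNReal.ofReal (|l| * L2y (dφ l)) :=
        lintegral_mono_ae hpointwise
    _ = ENNReal.ofReal √2 * ∫⁻ l, ENNReal.ofReal (|l| * L2y (dφ l)) :=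
        lintegral_const_mul _ hh.ennreal_ofReal
    _ ≤ ENNReal.ofReal √2 *
          (ENNReal.ofReal √Real.pi * D4n ν m ε c t φ dφ ^ (1 / 2 : ℝ)) := by
        gcongr
        refine (lintegral_ofReal_le_sqrt_pi_mul hν.1.le hm.le hε.1.le hc.le ht hh).trans ?_
        gcongr
        exact lintegral_ofReal_Wf_mul_sq_le_D4n ν m ε c t φ dφ
    _ = ENNReal.ofReal √(2 * Real.pi) * D4n ν m ε c t φ dφ ^ (1 / 2 : ℝ) := by
        rw [← mul_assoc, ← ENNReal.ofReal_mul (Real.sqrt_nonneg 2), Real.sqrt_mul zero_le_two]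

end
end

section
/- Under the standing assumptions, ∫_ℝ |k|^{-1/2}·‖∂_y ω_k‖_{L²_y([-1,1])} dk ≲ ν^{-1/2}·𝓓₁^{1/2}. (Third estimate of Lemma 3.1.) -/
open MeasureTheory Set Filter Topology
open scoped ENNReal

noncomputable section

/-! By Cauchy–Schwarz in `k`, it suffices that `|k|⁻¹ ≤ h(k) W(k)` for an integrable `h`.
Since `⟨k⁻¹⟩^{2ε} ≥ |k|^{-2ε}`, the choice `h(k) = |k|^{2ε-1} ⟨k⟩^{-2m}` works: it is integrable
near `0` because `2ε - 1 > -1` and at infinity because `2m > 1`. The remaining factor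
`W(k) ‖∂_y ω_k‖²` is bounded by `ν⁻¹` times the integrand of `𝓓₁`. -/

theorem lintegral_le_of_sq_le_mul {α : Type*} [MeasurableSpace α] {μ : Measure α}
    {f g h : α → ℝ≥0∞} (hg : AEMeasurable g μ) (hh : AEMeasurable h μ)
    (hfgh : ∀ x, f x ^ 2 ≤ g x * h x) :
    ∫⁻ x, f x ∂μ ≤ (∫⁻ x, g x ∂μ) ^ (1 / 2 : ℝ) * (∫⁻ x, h x ∂μ) ^ (1 / 2 : ℝ) := by
  have hsqrt : ∀ a : ℝ≥0∞, (a ^ (1 / 2 : ℝ)) ^ (2 : ℝ) = a := fun a => by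
    rw [← ENNReal.rpow_mul]; norm_num
  calc ∫⁻ x, f x ∂μ ≤ ∫⁻ x, g x ^ (1 / 2 : ℝ) * h x ^ (1 / 2 : ℝ) ∂μ := by
        refine lintegral_mono fun x => ?_
        calc f x = (f x ^ 2) ^ (1 / 2 : ℝ) := by
              rw [← ENNReal.rpow_natCast, ← ENNReal.rpow_mul]; norm_num
          _ ≤ (g x * h x) ^ (1 / 2 : ℝ) := by gcongr; exact hfgh x
          _ = _ := ENNReal.mul_rpow_of_nonneg _ _ (by norm_num)
    _ ≤ (∫⁻ x, (g x ^ (1 / 2 : ℝ)) ^ (2 : ℝ) ∂μ) ^ (1 / 2 : ℝ) *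
          (∫⁻ x, (h x ^ (1 / 2 : ℝ)) ^ (2 : ℝ) ∂μ) ^ (1 / 2 : ℝ) :=
        ENNReal.lintegral_mul_le_Lp_mul_Lq μ Real.HolderConjugate.two_two
          (hg.pow_const _) (hh.pow_const _)
    _ = _ := by simp only [hsqrt]

theorem integrable_abs_rpow_mul_one_add_sq_rpow_neg {a b : ℝ} (ha : -1 < a) (ha₀ : a ≤ 0)
    (hb : 1 / 2 < b) : Integrable fun k : ℝ => |k| ^ a * (1 + k ^ 2) ^ (-b) := by
  set F : ℝ → ℝ := fun k => |k| ^ a * (1 + k ^ 2) ^ (-b)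
  have hF : AEStronglyMeasurable F volume := by fun_prop
  have hnear : IntegrableOn F (Icc (-1) 1) := by
    refine (locallyIntegrable_of_norm_le_rpow (C := 1) (α := -a) (by simp) (by simp; linarith)
      ?_ hF).integrableOn_isCompact isCompact_Icc
    refine Eventually.of_forall fun k => ?_
    rw [Real.norm_eq_abs, abs_of_nonneg (by positivity), Real.norm_eq_abs, neg_neg, one_mul]
    exact mul_le_of_le_one_right (by positivity)
      (Real.rpow_le_one_of_one_le_of_nonpos (by nlinarith) (by linarith))
  have hfar : IntegrableOn F (Icc (-1) 1)ᶜ := by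
    refine (integrable_rpow_neg_one_add_norm_sq (E := ℝ) (μ := volume) (r := 2 * b)
      (by simp; linarith)).integrableOn.mono' hF.restrict ?_
    filter_upwards [ae_restrict_mem measurableSet_Icc.compl] with k hk
    have hk₁ : 1 ≤ |k| := by
      rw [mem_compl_iff, mem_Icc, ← abs_le, not_le] at hk
      exact hk.le
    rw [Real.norm_eq_abs, abs_of_nonneg (by positivity), Real.norm_eq_abs, sq_abs,
      neg_div, mul_div_cancel_left₀ _ two_ne_zero]
    exact mul_le_of_le_one_left (by positivity) (Real.rpow_le_one_of_one_le_of_nonpos hk₁ ha₀)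
  rw [← integrableOn_univ, ← union_compl_self (Icc (-1 : ℝ) 1)]
  exact hnear.union hfar

theorem sq_L2y_le_gradSq (k : ℝ) (f df : ℝ → ℂ) : L2y df ^ 2 ≤ gradSq k f df :=
  le_add_of_nonneg_left (by positivity)

theorem measurable_L2y_of_measurable_uncurry {ω : ℝ → ℝ → ℂ}
    (hω : Measurable (Function.uncurry ω)) : Measurable fun k => L2y (ω k) :=
  ((hω.norm.pow_const 2).stronglyMeasurable.integral_prod_right' (ν := volume.restrict
    (Icc (-1 : ℝ) 1))).measurable.pow_const _

theorem measurable_lamf (ν : ℝ) : Measurable (lamf ν) :=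
  Measurable.ite (measurableSet_le measurable_const measurable_abs) (by fun_prop) measurable_const

theorem one_add_sq_rpow_mul_le_Wf {ν c t : ℝ} (hν : 0 ≤ ν) (hc : 0 ≤ c) (ht : 0 ≤ t)
    (m ε k : ℝ) : (1 + k ^ 2) ^ m * (1 + k⁻¹ ^ 2) ^ ε ≤ Wf ν m ε c t k := by
  unfold Wf
  rw [mul_assoc]
  have := lamf_nonneg hν k
  exact le_mul_of_one_le_left (by positivity) (Real.one_le_exp (by positivity))

theorem abs_inv_le_mul_Wf {ν c t : ℝ} (hν : 0 ≤ ν) (hc : 0 ≤ c) (ht : 0 ≤ t) (m : ℝ)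
    {ε : ℝ} (hε : 0 ≤ ε) (k : ℝ) :
    |k|⁻¹ ≤ |k| ^ (2 * ε - 1) * (1 + k ^ 2) ^ (-m) * Wf ν m ε c t k := by
  rcases eq_or_ne k 0 with rfl | hk
  · unfold Wf
    simp only [abs_zero, inv_zero]
    positivity
  have hk' : 0 < |k| := abs_pos.mpr hk
  have hk2 : (k⁻¹ ^ 2) ^ ε = |k| ^ (-(2 * ε)) := by
    rw [inv_pow, ← sq_abs, ← Real.rpow_natCast, Real.inv_rpow (by positivity),
      ← Real.rpow_mul hk'.le, Real.rpow_neg hk'.le]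
    norm_num
  have hpos : (0 : ℝ) < 1 + k ^ 2 := by positivity
  have hk_pow : |k| ^ (2 * ε - 1) * |k| ^ (-(2 * ε)) = |k|⁻¹ := by
    rw [← Real.rpow_add hk', ← Real.rpow_neg_one]
    ring_nf
  have hbracket : (1 + k ^ 2) ^ (-m) * (1 + k ^ 2) ^ m = 1 := by
    rw [← Real.rpow_add hpos, neg_add_cancel, Real.rpow_zero]
  calc |k|⁻¹
        = (|k| ^ (2 * ε - 1) * |k| ^ (-(2 * ε))) * ((1 + k ^ 2) ^ (-m) * (1 + k ^ 2) ^ m) := by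
        rw [hk_pow, hbracket, mul_one]
    _ = |k| ^ (2 * ε - 1) * (1 + k ^ 2) ^ (-m) * ((1 + k ^ 2) ^ m * (k⁻¹ ^ 2) ^ ε) := by
        rw [hk2]; ring
    _ ≤ |k| ^ (2 * ε - 1) * (1 + k ^ 2) ^ (-m) * ((1 + k ^ 2) ^ m * (1 + k⁻¹ ^ 2) ^ ε) := by
        gcongr
        linarith
    _ ≤ _ := by gcongr; exact one_add_sq_rpow_mul_le_Wf hν hc ht m ε k

theorem sq_abs_rpow_neg_half_mul_L2y_le {ν c t : ℝ} (hν : 0 < ν) (hc : 0 ≤ c) (ht : 0 ≤ t)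
    (m : ℝ) {ε : ℝ} (hε : 0 ≤ ε) (k : ℝ) (f df : ℝ → ℂ) :
    (|k| ^ (-(1 : ℝ) / 2) * L2y df) ^ 2 ≤
      ν⁻¹ * (|k| ^ (2 * ε - 1) * (1 + k ^ 2) ^ (-m)) * (Wf ν m ε c t k * (ν * gradSq k f df)) := by
  have hweight := abs_inv_le_mul_Wf hν.le hc ht m hε k
  have hhalf : (|k| ^ (-(1 : ℝ) / 2)) ^ 2 = |k|⁻¹ := by
    rw [← Real.rpow_natCast, ← Real.rpow_mul (abs_nonneg k), ← Real.rpow_neg_one]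
    norm_num
  calc (|k| ^ (-(1 : ℝ) / 2) * L2y df) ^ 2 = |k|⁻¹ * L2y df ^ 2 := by rw [mul_pow, hhalf]
    _ ≤ |k| ^ (2 * ε - 1) * (1 + k ^ 2) ^ (-m) * Wf ν m ε c t k * gradSq k f df :=
        mul_le_mul hweight (sq_L2y_le_gradSq k f df) (by positivity)
          ((inv_nonneg.mpr (abs_nonneg k)).trans hweight)
    _ = _ := by field_simp

theorem lemma31_third (m ε : ℝ) (hm : 1 < m) (hε : ε ∈ Set.Ioo (0 : ℝ) (1 / 12)) :
    ∃ C : ℝ, 0 < C ∧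
      ∀ (ν c t : ℝ), ν ∈ Set.Ioo (0 : ℝ) 1 → 0 < c → 0 ≤ t →
      ∀ (ω dω d2ω φ dφ d2φ : ℝ → ℝ → ℂ),
      Measurable (Function.uncurry ω) → Measurable (Function.uncurry dω) →
      Measurable (Function.uncurry d2ω) → Measurable (Function.uncurry φ) →
      Measurable (Function.uncurry dφ) → Measurable (Function.uncurry d2φ) →
      (∀ k : ℝ, ω k (-1) = 0 ∧ ω k 1 = 0) →
      (∀ k : ℝ, ∀ y ∈ Set.Icc (-1 : ℝ) 1,
        ω k y = ω k (-1) + ∫ s in (-1 : ℝ)..y, dω k s) →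
      (∀ k : ℝ, ∀ y ∈ Set.Icc (-1 : ℝ) 1,
        dω k y = dω k (-1) + ∫ s in (-1 : ℝ)..y, d2ω k s) →
      (∀ k : ℝ, MemLp (d2ω k) 2 (volume.restrict (Set.Icc (-1 : ℝ) 1))) →
      (∀ k : ℝ, k ≠ 0 → φ k (-1) = 0 ∧ φ k 1 = 0) →
      (∀ k : ℝ, k ≠ 0 → ∀ y ∈ Set.Icc (-1 : ℝ) 1,
        φ k y = φ k (-1) + ∫ s in (-1 : ℝ)..y, dφ k s) →
      (∀ k : ℝ, k ≠ 0 → ∀ y ∈ Set.Icc (-1 : ℝ) 1,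
        dφ k y = dφ k (-1) + ∫ s in (-1 : ℝ)..y, d2φ k s) →
      (∀ k : ℝ, k ≠ 0 → ∀ y ∈ Set.Icc (-1 : ℝ) 1,
        d2φ k y - (k : ℂ) ^ 2 * φ k y = ω k y) →
      EEn ν m ε c t ω dω ≠ ⊤ → D1n ν m ε c t ω dω ≠ ⊤ → D2n ν m ε c t dω d2ω ≠ ⊤ →
      D3n ν m ε c t ω ≠ ⊤ → D4n ν m ε c t φ dφ ≠ ⊤ → D5n ν m ε c t dφ d2φ ≠ ⊤ →
      ∫⁻ k : ℝ, ENNReal.ofReal (|k| ^ (-(1 : ℝ) / 2) * L2y (dω k)) ≤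
        ENNReal.ofReal (C * ν ^ (-(1 : ℝ) / 2)) * (D1n ν m ε c t ω dω) ^ ((1 : ℝ) / 2) := by
  obtain ⟨hε₀, hε₁⟩ := hε
  set h : ℝ → ℝ := fun k => |k| ^ (2 * ε - 1) * (1 + k ^ 2) ^ (-m)
  have hh : Integrable h :=
    integrable_abs_rpow_mul_one_add_sq_rpow_neg (by linarith) (by linarith) (by linarith)
  have hh₀ : ∀ k, 0 ≤ h k := fun k => by positivity
  have hI : 0 ≤ ∫ k, h k := integral_nonneg hh₀
  -- `+ 1` spares proving `0 < ∫ h`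
  refine ⟨√((∫ k, h k) + 1), Real.sqrt_pos.mpr (by linarith), ?_⟩
  rintro ν c t ⟨hν, -⟩ hc ht ω dω _ _ _ _ hω hdω _ _ _ _ _ _ _ _ _ _ _ _ _ _ _ _ _ _
  have hD1 :
      Measurable fun k => ENNReal.ofReal (Wf ν m ε c t k * (ν * gradSq k (ω k) (dω k))) := by
    have := measurable_L2y_of_measurable_uncurry hω
    have := measurable_L2y_of_measurable_uncurry hdω
    have := measurable_Wf ν m ε c t
    unfold gradSq
    fun_prop
  calc ∫⁻ k : ℝ, ENNReal.ofReal (|k| ^ (-(1 : ℝ) / 2) * L2y (dω k))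
      ≤ (∫⁻ k, ENNReal.ofReal (ν⁻¹ * h k)) ^ (1 / 2 : ℝ) * (D1n ν m ε c t ω dω) ^ (1 / 2 : ℝ) :=
        lintegral_le_of_sq_le_mul (by fun_prop) hD1.aemeasurable fun k => by
          rw [← ENNReal.ofReal_pow (mul_nonneg (by positivity) (L2y_nonneg _)),
            ← ENNReal.ofReal_mul (mul_nonneg (by positivity) (hh₀ k))]
          exact ENNReal.ofReal_le_ofReal
            (sq_abs_rpow_neg_half_mul_L2y_le hν hc.le ht m hε₀.le k (ω k) (dω k))
    _ ≤ _ := by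
        gcongr
        rw [← ofReal_integral_eq_lintegral_ofReal (hh.const_mul ν⁻¹)
            (ae_of_all _ fun k => mul_nonneg (inv_nonneg.mpr hν.le) (hh₀ k)),
          integral_const_mul, ENNReal.ofReal_rpow_of_nonneg (by positivity) (by norm_num)]
        refine ENNReal.ofReal_le_ofReal ?_
        rw [Real.mul_rpow (by positivity) hI, Real.inv_rpow hν.le, ← Real.rpow_neg hν.le,
          ← Real.sqrt_eq_rpow, mul_comm, neg_div]
        gcongr
        linarith

end
end
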